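/- arXiv:math/0606754 — 2 statements merged into one kernel-verified Lean document; each statement's English description precedes it below -/
import Mathlib

section
/- Let (M,g) be a pseudo-Riemannian manifold, K a null conformal Killing vector field, and X a null vector field orthogonal to K. Then the Lie bracket [X,K] is orthogonal to both X and K; consequently, on the open set where K and X are linearly independent and span(K,X) is totally null, the distribution spanned by K and X is integrable. -/
/-- The Lie bracket of vector fields on ℝ⁴, in coordinates:
`[X,Y](p) = dY_p(X p) − dX_p(Y p)`. -/
noncomputable def lieB (X Y : (Fin 4 → ℝ) → (Fin 4 → ℝ)) : (Fin 4 → ℝ) → (Fin 4 → ℝ) :=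
  fun p => fderiv ℝ Y p (X p) - fderiv ℝ X p (Y p)

/- STATEMENT 1: Let (M,g) be pseudo-Riemannian with Levi-Civita connection D
   (torsion-free, metric), K a null conformal Killing field, and X a null vector
   field orthogonal to K.  Then [X,K] is orthogonal to both K and X; consequently,
   where K and X are linearly independent (so that span(K,X) is a totally null
   2-plane — total nullity is automatic from g(K,K) = g(X,X) = g(X,K) = 0), the
   bracket [X,K] lies in span(K,X), i.e. the distribution spanned by K and X is
   integrable. -/
theorem stmt_1
    (g : (Fin 4 → ℝ) → (Fin 4 → ℝ) → (Fin 4 → ℝ) → ℝ)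
    (hg_smooth : ∀ v w, ContDiff ℝ (⊤ : ℕ∞) (fun p => g p v w))
    (hg_symm : ∀ p v w, g p v w = g p w v)
    (hg_addl : ∀ p v₁ v₂ w, g p (v₁ + v₂) w = g p v₁ w + g p v₂ w)
    (hg_smull : ∀ p (c : ℝ) v w, g p (c • v) w = c * g p v w)
    (hg_nondeg : ∀ p v, (∀ w, g p v w = 0) → v = 0)
    (D : ((Fin 4 → ℝ) → (Fin 4 → ℝ)) → ((Fin 4 → ℝ) → (Fin 4 → ℝ)) →
      ((Fin 4 → ℝ) → (Fin 4 → ℝ)))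
    (htorsionfree : ∀ X Y, ContDiff ℝ (⊤ : ℕ∞) X → ContDiff ℝ (⊤ : ℕ∞) Y →
      ∀ p, D X Y p - D Y X p = lieB X Y p)
    (hcompat : ∀ X Y Z, ContDiff ℝ (⊤ : ℕ∞) X → ContDiff ℝ (⊤ : ℕ∞) Y → ContDiff ℝ (⊤ : ℕ∞) Z →
      ∀ p, fderiv ℝ (fun q => g q (Y q) (Z q)) p (X p)
        = g p (D X Y p) (Z p) + g p (Y p) (D X Z p))
    (K X : (Fin 4 → ℝ) → (Fin 4 → ℝ)) (f : (Fin 4 → ℝ) → ℝ)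
    (hK : ContDiff ℝ (⊤ : ℕ∞) K) (hX : ContDiff ℝ (⊤ : ℕ∞) X)
    (hKnull : ∀ p, g p (K p) (K p) = 0)
    (hXnull : ∀ p, g p (X p) (X p) = 0)
    (horth : ∀ p, g p (X p) (K p) = 0)
    (hconfKilling : ∀ U Y, ContDiff ℝ (⊤ : ℕ∞) U → ContDiff ℝ (⊤ : ℕ∞) Y →
      ∀ p, g p (D U K p) (Y p) + g p (D Y K p) (U p) = f p * g p (U p) (Y p)) :
    ∀ p, (K p ≠ 0 → g p (lieB X K p) (K p) = 0) ∧
      g p (lieB X K p) (X p) = 0 ∧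
      (LinearIndependent ℝ ![K p, X p] →
        lieB X K p ∈ Submodule.span ℝ ({K p, X p} : Set (Fin 4 → ℝ))) := by
  intro p
  -- abbreviations and helper lemmas for bilinearity at p
  have gsub : ∀ a b w : Fin 4 → ℝ, g p (a - b) w = g p a w - g p b w := by
    intro a b w
    rw [sub_eq_add_neg, hg_addl, ← neg_one_smul ℝ b, hg_smull]; ring
  -- the zero-function fderiv trick
  have hzero : ∀ (F : (Fin 4 → ℝ) → ℝ), (∀ q, F q = 0) → fderiv ℝ F p = 0 := by
    intro F hF
    have : F = fun _ => (0 : ℝ) := funext hF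
    rw [this, fderiv_fun_const]; rfl
  -- g p (D X K p) (K p) = 0
  have h1 : g p (D X K p) (K p) = 0 := by
    have hc := hcompat X K K hX hK hK p
    rw [hzero _ hKnull] at hc
    have := hg_symm p (K p) (D X K p)
    simp only [ContinuousLinearMap.zero_apply] at hc
    linarith [hc, this]
  -- g p (D K K p) (X p) = 0
  have h2 : g p (D K K p) (X p) = 0 := by
    have hc := hconfKilling K X hK hX p
    rw [hg_symm p (K p) (X p), horth p] at hc
    -- g p (D K K p) (X p) + g p (D X K p)(K p) = 0
    rw [h1] at hc; linarith
  -- g p (D K X p) (K p) = 0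
  have h3 : g p (D K X p) (K p) = 0 := by
    have hc := hcompat K X K hK hX hK p
    rw [hzero _ horth] at hc
    simp only [ContinuousLinearMap.zero_apply] at hc
    rw [hg_symm p (X p) (D K K p)] at hc
    linarith [hc, h2]
  -- g p (D K X p) (X p) = 0
  have h4 : g p (D K X p) (X p) = 0 := by
    have hc := hcompat K X X hK hX hX p
    rw [hzero _ hXnull] at hc
    simp only [ContinuousLinearMap.zero_apply] at hc
    have := hg_symm p (X p) (D K X p)
    linarith
  -- g p (D X K p) (X p) = 0
  have h5 : g p (D X K p) (X p) = 0 := by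
    have hc := hconfKilling X X hX hX p
    rw [hXnull p] at hc; linarith
  have htf : lieB X K p = D X K p - D K X p := (htorsionfree X K hX hK p).symm
  have hLK : g p (lieB X K p) (K p) = 0 := by
    rw [htf, gsub, h1, h3]; ring
  have hLX : g p (lieB X K p) (X p) = 0 := by
    rw [htf, gsub, h5, h4]; ring
  refine ⟨fun _ => hLK, hLX, fun hli => ?_⟩
  -- build the bilinear form at p
  classical
  set B : LinearMap.BilinForm ℝ (Fin 4 → ℝ) :=
    LinearMap.mk₂ ℝ (g p) (fun a b w => hg_addl p a b w)
      (fun c a w => hg_smull p c a w)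
      (fun w a b => by rw [hg_symm p w, hg_addl, hg_symm p a w, hg_symm p b w])
      (fun c w a => by rw [hg_symm p w, hg_smull, hg_symm p a w, smul_eq_mul]) with hB
  have hBapp : ∀ a b, B a b = g p a b := fun a b => rfl
  have hrefl : B.IsRefl := by
    intro a b hab
    rw [hBapp] at hab ⊢
    rw [hg_symm]; exact hab
  have hnondeg : B.Nondegenerate := by
    refine ⟨fun a ha => ?_, fun a ha => ?_⟩
    · exact hg_nondeg p a (fun w => ha w)
    · exact hg_nondeg p a (fun w => by rw [hg_symm]; exact ha w)
  set W : Submodule ℝ (Fin 4 → ℝ) := Submodule.span ℝ ({K p, X p} : Set (Fin 4 → ℝ)) with hW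
  -- any vector orthogonal to K p and X p is orthogonal to W
  have horthW : ∀ v : Fin 4 → ℝ, g p (K p) v = 0 → g p (X p) v = 0 →
      v ∈ B.orthogonal W := by
    intro v hvK hvX
    rw [LinearMap.BilinForm.mem_orthogonal_iff]
    intro n hn
    induction hn using Submodule.span_induction with
    | mem x hx =>
      rcases hx with h | h
      · subst h; exact hvK
      · rw [Set.mem_singleton_iff] at h; subst h; exact hvX
    | zero => simp [LinearMap.BilinForm.IsOrtho, hBapp]
    | add a b _ _ ha hb =>
      show B (a + b) v = 0
      rw [map_add]; simp only [LinearMap.add_apply]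
      rw [show B a v = 0 from ha, show B b v = 0 from hb]; ring
    | smul c a _ ha =>
      show B (c • a) v = 0
      rw [map_smul]; simp only [LinearMap.smul_apply, smul_eq_mul]
      rw [show B a v = 0 from ha]; ring
  -- W is totally null: W ≤ orthogonal W
  have hWle : W ≤ B.orthogonal W := by
    rw [hW, Submodule.span_le]
    rintro x (h | h)
    · subst h
      exact horthW _ (hKnull p) (horth p)
    · rw [Set.mem_singleton_iff] at h; subst h
      exact horthW _ (by rw [hg_symm]; exact horth p) (hXnull p)
  -- dimension count
  have hrange : Set.range ![K p, X p] = ({K p, X p} : Set (Fin 4 → ℝ)) := by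
    ext x
    simp only [Set.mem_range, Fin.exists_fin_two, Matrix.cons_val_zero,
      Matrix.cons_val_one, Matrix.head_cons, Set.mem_insert_iff, Set.mem_singleton_iff]
    tauto
  have hfW : Module.finrank ℝ W = 2 := by
    rw [hW, ← hrange, finrank_span_eq_card hli]
    simp
  have hftot : Module.finrank ℝ (Fin 4 → ℝ) = 4 := by simp
  have hfO : Module.finrank ℝ (B.orthogonal W) = 2 := by
    rw [LinearMap.BilinForm.finrank_orthogonal hnondeg, hfW, hftot]
  have hWeq : W = B.orthogonal W :=
    Submodule.eq_of_le_of_finrank_le hWle (by rw [hfW, hfO])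
  have : lieB X K p ∈ B.orthogonal W :=
    horthW _ (by rw [hg_symm]; exact hLK) (by rw [hg_symm]; exact hLX)
  rw [← hWeq] at this
  exact this
end

section
/- Let a(λ) = a₀ + a₁λ + a₂λ² + a₃λ³ with coefficients smooth functions of (x,y), and let β(x,y,z) be a smooth function. Define vector fields L₀' = (λ − β)∂_z and L₁' = ∂_x + λ∂_y + a(λ)∂_λ on an open set with coordinates (x,y,z,λ). Then [L₀', L₁'] = b·L₀' for some function b(x,y,z,λ) if and only if β satisfies β_x + β β_y − a(β) = 0, in which case b = β_y − (a(λ) − a(β))/(λ − β). -/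
/-- `F` depends only on the coordinates in `s`. -/
def dependsOnlyOn {α : Type*} (s : Set (Fin 4)) (F : (Fin 4 → ℝ) → α) : Prop :=
  ∀ p q : Fin 4 → ℝ, (∀ i ∈ s, p i = q i) → F p = F q

/- STATEMENT 7: Coordinates (x,y,z,λ) = (0,1,2,3).  With a(λ) = a₀+a₁λ+a₂λ²+a₃λ³
   (coefficients functions of (x,y)) and β = β(x,y,z), set
     L₀' = (λ − β)∂_z,   L₁' = ∂_x + λ∂_y + a(λ)∂_λ.
   Then [L₀',L₁'] = b·L₀' for some (continuous) function b on {λ ≠ β} if and only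
   if β_x + ββ_y − a(β) = 0, in which case b = β_y − (a(λ)−a(β))/(λ−β), the
   difference quotient being the polynomial a₁ + a₂(λ+β) + a₃(λ²+λβ+β²). -/
open Classical in
noncomputable def projS (s : Set (Fin 4)) : (Fin 4 → ℝ) →L[ℝ] (Fin 4 → ℝ) :=
  LinearMap.toContinuousLinearMap
    { toFun := fun p i => if i ∈ s then p i else 0
      map_add' := by intro p q; funext i; by_cases h : i ∈ s <;> simp [h]
      map_smul' := by intro c p; funext i; by_cases h : i ∈ s <;> simp [h] }

open Classical in
lemma projS_apply (s : Set (Fin 4)) (p : Fin 4 → ℝ) (i : Fin 4) :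
    projS s p i = if i ∈ s then p i else 0 := rfl

lemma depends_fderiv (s : Set (Fin 4)) (F : (Fin 4 → ℝ) → ℝ)
    (hF : Differentiable ℝ F) (hFd : dependsOnlyOn s F) (p : Fin 4 → ℝ) :
    fderiv ℝ F p = (fderiv ℝ F (projS s p)).comp (projS s) := by
  have hFP : F = F ∘ (projS s) := funext fun r => hFd r _ (fun i hi => by simp [projS_apply, hi])
  calc fderiv ℝ F p = fderiv ℝ (F ∘ projS s) p := by rw [← hFP]
    _ = (fderiv ℝ F (projS s p)).comp (fderiv ℝ (projS s) p) :=
        fderiv_comp p (hF _) ((projS s).differentiableAt)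
    _ = (fderiv ℝ F (projS s p)).comp (projS s) := by rw [(projS s).fderiv]

lemma fderiv_eq_of_agree (s : Set (Fin 4)) (F : (Fin 4 → ℝ) → ℝ)
    (hF : Differentiable ℝ F) (hFd : dependsOnlyOn s F) (p q : Fin 4 → ℝ)
    (h : ∀ i ∈ s, p i = q i) : fderiv ℝ F p = fderiv ℝ F q := by
  have hpq : projS s p = projS s q := by
    funext i; by_cases hi : i ∈ s <;> simp [projS_apply, hi, h]
  rw [depends_fderiv s F hF hFd p, depends_fderiv s F hF hFd q, hpq]

lemma fderiv_single_zero (s : Set (Fin 4)) (F : (Fin 4 → ℝ) → ℝ)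
    (hF : Differentiable ℝ F) (hFd : dependsOnlyOn s F) (p : Fin 4 → ℝ)
    (j : Fin 4) (hj : j ∉ s) : fderiv ℝ F p (Pi.single j 1) = 0 := by
  rw [depends_fderiv s F hF hFd p]
  have : projS s (Pi.single j 1) = 0 := by
    funext i
    by_cases hi : i ∈ s
    · have : i ≠ j := fun h => hj (h ▸ hi)
      simp [projS_apply, hi, Pi.single_eq_of_ne this]
    · simp [projS_apply, hi]
  simp [this]

lemma dir_zero (F : (Fin 4 → ℝ) → ℝ) (p v : Fin 4 → ℝ)
    (hF : DifferentiableAt ℝ F p) (h : ∀ t : ℝ, F (p + t • v) = F p) :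
    fderiv ℝ F p v = 0 := by
  have hline : HasDerivAt (fun t : ℝ => p + t • v) v 0 := by
    simpa using ((hasDerivAt_id (0:ℝ)).smul_const v).const_add p
  have h1 : HasDerivAt (fun t : ℝ => F (p + t • v)) (fderiv ℝ F p v) 0 := by
    have hF' : HasFDerivAt F (fderiv ℝ F p) ((fun t : ℝ => p + t • v) 0) := by
      simpa using hF.hasFDerivAt
    exact hF'.comp_hasDerivAt 0 hline
  have h2 : HasDerivAt (fun t : ℝ => F (p + t • v)) 0 0 := by
    simp_rw [h]; exact hasDerivAt_const 0 (F p)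
  exact h1.unique h2

lemma core_lemma
    (a₀ a₁ a₂ a₃ β : (Fin 4 → ℝ) → ℝ)
    (ha₀ : ContDiff ℝ (⊤ : ℕ∞) a₀) (ha₁ : ContDiff ℝ (⊤ : ℕ∞) a₁)
    (ha₂ : ContDiff ℝ (⊤ : ℕ∞) a₂) (ha₃ : ContDiff ℝ (⊤ : ℕ∞) a₃) (hβ : ContDiff ℝ (⊤ : ℕ∞) β)
    (ha₀d : dependsOnlyOn ({0, 1} : Set (Fin 4)) a₀)
    (ha₁d : dependsOnlyOn ({0, 1} : Set (Fin 4)) a₁)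
    (ha₂d : dependsOnlyOn ({0, 1} : Set (Fin 4)) a₂)
    (ha₃d : dependsOnlyOn ({0, 1} : Set (Fin 4)) a₃)
    (hβd : dependsOnlyOn ({0, 1, 2} : Set (Fin 4)) β) (p : Fin 4 → ℝ) :
    lieB (fun q => (q 3 - β q) • (Pi.single (2 : Fin 4) (1 : ℝ) : Fin 4 → ℝ))
      (fun q => (Pi.single (0 : Fin 4) (1 : ℝ) : Fin 4 → ℝ)
        + q 3 • (Pi.single (1 : Fin 4) (1 : ℝ) : Fin 4 → ℝ)
        + (a₀ q + a₁ q * q 3 + a₂ q * (q 3) ^ 2 + a₃ q * (q 3) ^ 3)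
            • (Pi.single (3 : Fin 4) (1 : ℝ) : Fin 4 → ℝ)) p
    = (fderiv ℝ β p (Pi.single (0 : Fin 4) (1 : ℝ))
        + p 3 * fderiv ℝ β p (Pi.single (1 : Fin 4) (1 : ℝ))
        - (a₀ p + a₁ p * p 3 + a₂ p * (p 3) ^ 2 + a₃ p * (p 3) ^ 3))
      • (Pi.single (2 : Fin 4) (1 : ℝ) : Fin 4 → ℝ) := by
  have hβdiff : Differentiable ℝ β := hβ.differentiable (by simp)
  have hq3 : Differentiable ℝ (fun q : Fin 4 → ℝ => q 3) :=
    (ContinuousLinearMap.proj 3 : (Fin 4 → ℝ) →L[ℝ] ℝ).differentiable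
  set A : (Fin 4 → ℝ) → ℝ :=
    fun q => a₀ q + a₁ q * q 3 + a₂ q * (q 3) ^ 2 + a₃ q * (q 3) ^ 3 with hA_def
  have hAdiff : Differentiable ℝ A := by
    apply Differentiable.add
    apply Differentiable.add
    apply Differentiable.add
    · exact ha₀.differentiable (by simp)
    · exact (ha₁.differentiable (by simp)).mul hq3
    · exact (ha₂.differentiable (by simp)).mul (hq3.pow 2)
    · exact (ha₃.differentiable (by simp)).mul (hq3.pow 3)
  -- X and Y
  set e₀ : Fin 4 → ℝ := Pi.single (0 : Fin 4) (1 : ℝ)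
  set e₁ : Fin 4 → ℝ := Pi.single (1 : Fin 4) (1 : ℝ)
  set e₂ : Fin 4 → ℝ := Pi.single (2 : Fin 4) (1 : ℝ)
  set e₃ : Fin 4 → ℝ := Pi.single (3 : Fin 4) (1 : ℝ)
  have hX : HasFDerivAt (fun q : Fin 4 → ℝ => (q 3 - β q) • e₂)
      (((ContinuousLinearMap.proj 3 : (Fin 4 → ℝ) →L[ℝ] ℝ)
        - fderiv ℝ β p).smulRight e₂) p := by
    exact ((ContinuousLinearMap.proj 3 : (Fin 4 → ℝ) →L[ℝ] ℝ).hasFDerivAt.sub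
      (hβdiff p).hasFDerivAt).smul_const e₂
  have hY : HasFDerivAt (fun q : Fin 4 → ℝ => e₀ + q 3 • e₁ + A q • e₃)
      ((0 : (Fin 4 → ℝ) →L[ℝ] (Fin 4 → ℝ))
        + (ContinuousLinearMap.proj 3 : (Fin 4 → ℝ) →L[ℝ] ℝ).smulRight e₁
        + (fderiv ℝ A p).smulRight e₃) p := by
    exact ((hasFDerivAt_const e₀ p).add
      (((ContinuousLinearMap.proj 3 : (Fin 4 → ℝ) →L[ℝ] ℝ).hasFDerivAt).smul_const e₁)).add
      ((hAdiff p).hasFDerivAt.smul_const e₃)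
  -- directional derivatives that vanish
  have hDAe₂ : fderiv ℝ A p e₂ = 0 := by
    apply dir_zero A p e₂ (hAdiff p)
    intro t
    have h0 : ∀ i ∈ ({0,1} : Set (Fin 4)), (p + t • e₂) i = p i := by
      intro i hi
      rcases hi with hi | hi <;> subst hi <;>
        simp [e₂, Pi.single_eq_of_ne (by decide : (0:Fin 4) ≠ 2),
          Pi.single_eq_of_ne (by decide : (1:Fin 4) ≠ 2)]
    have h3 : (p + t • e₂) 3 = p 3 := by
      simp [e₂, Pi.single_eq_of_ne (by decide : (3:Fin 4) ≠ 2)]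
    simp only [hA_def, ha₀d _ _ h0, ha₁d _ _ h0, ha₂d _ _ h0, ha₃d _ _ h0, h3]
  have hDβe₃ : fderiv ℝ β p e₃ = 0 :=
    fderiv_single_zero _ β hβdiff hβd p 3 (by simp)
  -- unfold lieB
  rw [lieB, hX.fderiv, hY.fderiv]
  have he₂3 : e₂ 3 = 0 := Pi.single_eq_of_ne (by decide) 1
  have he₀3 : e₀ 3 = 0 := Pi.single_eq_of_ne (by decide) 1
  have he₁3 : e₁ 3 = 0 := Pi.single_eq_of_ne (by decide) 1
  have he₃3 : e₃ 3 = 1 := Pi.single_eq_same 3 1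
  simp only [ContinuousLinearMap.add_apply, ContinuousLinearMap.zero_apply,
    ContinuousLinearMap.smulRight_apply, ContinuousLinearMap.proj_apply,
    ContinuousLinearMap.sub_apply, map_add, map_smul, Pi.smul_apply, Pi.add_apply,
    he₂3, he₀3, he₁3, he₃3, hDAe₂, hDβe₃, smul_eq_mul]
  module

lemma part2_lemma
    (a₀ a₁ a₂ a₃ β : (Fin 4 → ℝ) → ℝ)
    (ha₀ : ContDiff ℝ (⊤ : ℕ∞) a₀) (ha₁ : ContDiff ℝ (⊤ : ℕ∞) a₁)
    (ha₂ : ContDiff ℝ (⊤ : ℕ∞) a₂) (ha₃ : ContDiff ℝ (⊤ : ℕ∞) a₃) (hβ : ContDiff ℝ (⊤ : ℕ∞) β)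
    (ha₀d : dependsOnlyOn ({0, 1} : Set (Fin 4)) a₀)
    (ha₁d : dependsOnlyOn ({0, 1} : Set (Fin 4)) a₁)
    (ha₂d : dependsOnlyOn ({0, 1} : Set (Fin 4)) a₂)
    (ha₃d : dependsOnlyOn ({0, 1} : Set (Fin 4)) a₃)
    (hβd : dependsOnlyOn ({0, 1, 2} : Set (Fin 4)) β)
    (hPDE : ∀ p : Fin 4 → ℝ,
        fderiv ℝ β p (Pi.single (0 : Fin 4) (1 : ℝ))
          + β p * fderiv ℝ β p (Pi.single (1 : Fin 4) (1 : ℝ))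
          - (a₀ p + a₁ p * β p + a₂ p * (β p) ^ 2 + a₃ p * (β p) ^ 3) = 0)
    (p : Fin 4 → ℝ) :
      lieB (fun q => (q 3 - β q) • (Pi.single (2 : Fin 4) (1 : ℝ) : Fin 4 → ℝ))
        (fun q => (Pi.single (0 : Fin 4) (1 : ℝ) : Fin 4 → ℝ)
          + q 3 • (Pi.single (1 : Fin 4) (1 : ℝ) : Fin 4 → ℝ)
          + (a₀ q + a₁ q * q 3 + a₂ q * (q 3) ^ 2 + a₃ q * (q 3) ^ 3)
              • (Pi.single (3 : Fin 4) (1 : ℝ) : Fin 4 → ℝ)) p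
      = (fderiv ℝ β p (Pi.single (1 : Fin 4) (1 : ℝ))
          - (a₁ p + a₂ p * (p 3 + β p)
            + a₃ p * ((p 3) ^ 2 + p 3 * β p + (β p) ^ 2)))
        • ((p 3 - β p) • (Pi.single (2 : Fin 4) (1 : ℝ) : Fin 4 → ℝ)) := by
  rw [core_lemma a₀ a₁ a₂ a₃ β ha₀ ha₁ ha₂ ha₃ hβ ha₀d ha₁d ha₂d ha₃d hβd p, smul_smul]
  congr 1
  linear_combination hPDE p

theorem stmt_7
    (a₀ a₁ a₂ a₃ β : (Fin 4 → ℝ) → ℝ)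
    (ha₀ : ContDiff ℝ (⊤ : ℕ∞) a₀) (ha₁ : ContDiff ℝ (⊤ : ℕ∞) a₁)
    (ha₂ : ContDiff ℝ (⊤ : ℕ∞) a₂) (ha₃ : ContDiff ℝ (⊤ : ℕ∞) a₃) (hβ : ContDiff ℝ (⊤ : ℕ∞) β)
    (ha₀d : dependsOnlyOn ({0, 1} : Set (Fin 4)) a₀)
    (ha₁d : dependsOnlyOn ({0, 1} : Set (Fin 4)) a₁)
    (ha₂d : dependsOnlyOn ({0, 1} : Set (Fin 4)) a₂)
    (ha₃d : dependsOnlyOn ({0, 1} : Set (Fin 4)) a₃)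
    (hβd : dependsOnlyOn ({0, 1, 2} : Set (Fin 4)) β) :
    ((∃ b : (Fin 4 → ℝ) → ℝ, Continuous b ∧
        ∀ p, p 3 ≠ β p →
          lieB (fun q => (q 3 - β q) • (Pi.single (2 : Fin 4) (1 : ℝ) : Fin 4 → ℝ))
            (fun q => (Pi.single (0 : Fin 4) (1 : ℝ) : Fin 4 → ℝ)
              + q 3 • (Pi.single (1 : Fin 4) (1 : ℝ) : Fin 4 → ℝ)
              + (a₀ q + a₁ q * q 3 + a₂ q * (q 3) ^ 2 + a₃ q * (q 3) ^ 3)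
                  • (Pi.single (3 : Fin 4) (1 : ℝ) : Fin 4 → ℝ)) p
          = b p • ((p 3 - β p) • (Pi.single (2 : Fin 4) (1 : ℝ) : Fin 4 → ℝ)))
      ↔ (∀ p : Fin 4 → ℝ,
          fderiv ℝ β p (Pi.single (0 : Fin 4) (1 : ℝ))
            + β p * fderiv ℝ β p (Pi.single (1 : Fin 4) (1 : ℝ))
            - (a₀ p + a₁ p * β p + a₂ p * (β p) ^ 2 + a₃ p * (β p) ^ 3) = 0)) ∧
    ((∀ p : Fin 4 → ℝ,
        fderiv ℝ β p (Pi.single (0 : Fin 4) (1 : ℝ))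
          + β p * fderiv ℝ β p (Pi.single (1 : Fin 4) (1 : ℝ))
          - (a₀ p + a₁ p * β p + a₂ p * (β p) ^ 2 + a₃ p * (β p) ^ 3) = 0) →
      ∀ p : Fin 4 → ℝ,
        lieB (fun q => (q 3 - β q) • (Pi.single (2 : Fin 4) (1 : ℝ) : Fin 4 → ℝ))
          (fun q => (Pi.single (0 : Fin 4) (1 : ℝ) : Fin 4 → ℝ)
            + q 3 • (Pi.single (1 : Fin 4) (1 : ℝ) : Fin 4 → ℝ)
            + (a₀ q + a₁ q * q 3 + a₂ q * (q 3) ^ 2 + a₃ q * (q 3) ^ 3)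
                • (Pi.single (3 : Fin 4) (1 : ℝ) : Fin 4 → ℝ)) p
        = (fderiv ℝ β p (Pi.single (1 : Fin 4) (1 : ℝ))
            - (a₁ p + a₂ p * (p 3 + β p)
              + a₃ p * ((p 3) ^ 2 + p 3 * β p + (β p) ^ 2)))
          • ((p 3 - β p) • (Pi.single (2 : Fin 4) (1 : ℝ) : Fin 4 → ℝ))) := by
  have hβdiff : Differentiable ℝ β := hβ.differentiable (by simp)
  have core := core_lemma a₀ a₁ a₂ a₃ β ha₀ ha₁ ha₂ ha₃ hβ ha₀d ha₁d ha₂d ha₃d hβd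
  have part2 := part2_lemma a₀ a₁ a₂ a₃ β ha₀ ha₁ ha₂ ha₃ hβ ha₀d ha₁d ha₂d ha₃d hβd
  refine ⟨⟨?_, ?_⟩, part2⟩
  · -- forward direction
    rintro ⟨b, hb, hEq⟩ p
    set Q : ℝ → (Fin 4 → ℝ) := fun t => Function.update p 3 t with hQ_def
    have hQagree : ∀ t : ℝ, ∀ i ∈ ({0,1,2} : Set (Fin 4)), Q t i = p i := by
      intro t i hi
      have : i ≠ 3 := by rcases hi with hi | hi | hi <;> subst hi <;> decide
      simp [hQ_def, Function.update_of_ne this]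
    have hQagree' : ∀ t : ℝ, ∀ i ∈ ({0,1} : Set (Fin 4)), Q t i = p i := by
      intro t i hi
      simp only [Set.mem_insert_iff, Set.mem_singleton_iff] at hi
      exact hQagree t i (by simp only [Set.mem_insert_iff, Set.mem_singleton_iff]; tauto)
    have hβQ : ∀ t : ℝ, β (Q t) = β p := fun t => hβd _ _ (hQagree t)
    have ha₀Q : ∀ t : ℝ, a₀ (Q t) = a₀ p := fun t => ha₀d _ _ (hQagree' t)
    have ha₁Q : ∀ t : ℝ, a₁ (Q t) = a₁ p := fun t => ha₁d _ _ (hQagree' t)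
    have ha₂Q : ∀ t : ℝ, a₂ (Q t) = a₂ p := fun t => ha₂d _ _ (hQagree' t)
    have ha₃Q : ∀ t : ℝ, a₃ (Q t) = a₃ p := fun t => ha₃d _ _ (hQagree' t)
    have hDβQ : ∀ t : ℝ, fderiv ℝ β (Q t) = fderiv ℝ β p := fun t =>
      fderiv_eq_of_agree _ β hβdiff hβd _ _ (hQagree t)
    have hQ3 : ∀ t : ℝ, Q t 3 = t := fun t => Function.update_self 3 t p
    -- scalar functions
    set f : ℝ → ℝ := fun t => fderiv ℝ β p (Pi.single (0 : Fin 4) (1 : ℝ))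
      + t * fderiv ℝ β p (Pi.single (1 : Fin 4) (1 : ℝ))
      - (a₀ p + a₁ p * t + a₂ p * t ^ 2 + a₃ p * t ^ 3) with hf_def
    set g : ℝ → ℝ := fun t => b (Q t) * (t - β p) with hg_def
    have hfg : ∀ t : ℝ, t ≠ β p → f t = g t := by
      intro t ht
      have h1 := hEq (Q t) (by rw [hQ3, hβQ]; exact ht)
      rw [core (Q t)] at h1
      have h2 := congrFun h1 2
      simpa [hQ3, hβQ, ha₀Q, ha₁Q, ha₂Q, ha₃Q, hDβQ, hf_def, hg_def, smul_eq_mul,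
        Pi.smul_apply, Pi.single_eq_same] using h2
    have hfc : Continuous f := by fun_prop
    have hgc : Continuous g := by
      apply Continuous.mul
      · exact hb.comp (continuous_const.update 3 continuous_id)
      · fun_prop
    -- limits along punctured neighborhood
    have hne : (nhdsWithin (β p) {(β p)}ᶜ).NeBot := by infer_instance
    have hlim1 : Filter.Tendsto f (nhdsWithin (β p) {(β p)}ᶜ) (nhds (f (β p))) :=
      (hfc.continuousAt).continuousWithinAt
    have hlim2 : Filter.Tendsto f (nhdsWithin (β p) {(β p)}ᶜ) (nhds (g (β p))) := by
      refine Filter.Tendsto.congr' ?_ (hgc.continuousAt).continuousWithinAt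
      filter_upwards [self_mem_nhdsWithin] with t ht
      exact (hfg t ht).symm
    have h3 : f (β p) = g (β p) := tendsto_nhds_unique hlim1 hlim2
    have h4 : g (β p) = 0 := by simp [hg_def]
    rw [h4] at h3
    exact h3
  · -- backward: existence of b
    intro hPDE
    refine ⟨fun p => fderiv ℝ β p (Pi.single (1 : Fin 4) (1 : ℝ))
      - (a₁ p + a₂ p * (p 3 + β p) + a₃ p * ((p 3) ^ 2 + p 3 * β p + (β p) ^ 2)), ?_, ?_⟩
    · have h1 : Continuous fun p : Fin 4 → ℝ =>
          fderiv ℝ β p (Pi.single (1 : Fin 4) (1 : ℝ)) :=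
        (hβ.continuous_fderiv (by simp)).clm_apply continuous_const
      have hp3 : Continuous fun p : Fin 4 → ℝ => p 3 := continuous_apply 3
      exact h1.sub (((ha₁.continuous).add ((ha₂.continuous).mul (hp3.add hβ.continuous))).add
        ((ha₃.continuous).mul (((hp3.pow 2).add (hp3.mul hβ.continuous)).add
          (hβ.continuous.pow 2))))
    · intro p _
      exact part2 hPDE p
end
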